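/- arXiv:math/0506082 — 2 statements merged into one kernel-verified Lean document; each statement's English description precedes it below -/
import Mathlib

section
/- The map s mod σ^N ↦ (s mod σ, D(s)) from T[B] = S/σ^N to B × {e/x_1, …, e/x_N}, where B = S/σ, is a well-defined bijection. In particular, the fiber of the natural projection π : T[B] → B over each flat tile has exactly N elements. -/
/-!
Write `σ` for the shift. Since `σ` rotates `ρ` by one step, `D(σ^k s) = e − e_{ρ(N + k)}`, indices
taken mod `N`. As `ρ` is a permutation, `D(σ^k s) = D(s)` exactly when `N ∣ k`: so the gradient is
an invariant of `σ^N`-classes which separates the `N` classes inside one `σ`-orbit, and every value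
`e − e_i` is attained there, by `k = ρ⁻¹(i) − N`.
-/

structure Slant (N : ℕ) where
  a : Fin N → ℤ
  ρ : Equiv.Perm (Fin N)

def Slant.shift {N : ℕ} [NeZero N] (s : Slant N) : Slant N :=
  ⟨s.a + Pi.single (s.ρ 0) 1, (finRotate N).trans s.ρ⟩

/-- Gradient `D(s) = e − e_{ρ(N)}`. -/
def Slant.grad {n : ℕ} (s : Slant (n + 1)) : Fin (n + 1) → ℤ :=
  (fun _ => 1) - Pi.single (s.ρ (Fin.last n)) 1

/-- `s ~ s'` mod `σ` : `s' = σ^k(s)` for some `k ∈ ℤ`. -/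
def relσ (n : ℕ) (s s' : Slant (n + 1)) : Prop :=
  ∃ k : ℕ, Slant.shift^[k] s = s' ∨ Slant.shift^[k] s' = s

/-- `s ~ s'` mod `σ^N` : `s' = σ^{Nk}(s)` for some `k ∈ ℤ`. -/
def relσN (n : ℕ) (s s' : Slant (n + 1)) : Prop :=
  ∃ k : ℕ, Slant.shift^[(n + 1) * k] s = s' ∨ Slant.shift^[(n + 1) * k] s' = s

/-- The set `{e/x_1, …, e/x_N}` of possible gradient values. -/
def gradVals (n : ℕ) : Set (Fin (n + 1) → ℤ) :=
  Set.range (fun i : Fin (n + 1) => (fun _ => 1) - Pi.single i (1 : ℤ))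

open Function Fin.NatCast

theorem Function.Injective.equivalence_iterate {α : Type*} {f : α → α} (hf : Injective f) :
    Equivalence (fun x y => ∃ k : ℕ, f^[k] x = y ∨ f^[k] y = x) := by
  have meet {x y z : α} {j k : ℕ} (hx : f^[j] x = z) (hy : f^[k] y = z) (hjk : j ≤ k) :
      f^[k - j] y = x := by
    refine hf.iterate j ?_
    rw [← iterate_add_apply, Nat.add_sub_cancel' hjk, hx, hy]
  have split {x y z : α} {j k : ℕ} (hx : f^[j] z = x) (hy : f^[k] z = y) (hjk : j ≤ k) :
      f^[k - j] x = y := by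
    rw [← hx, ← iterate_add_apply, Nat.sub_add_cancel hjk, hy]
  refine ⟨fun x => ⟨0, .inl rfl⟩, fun ⟨k, h⟩ => ⟨k, h.symm⟩, ?_⟩
  rintro x y z ⟨j, hxy | hyx⟩ ⟨k, hyz | hzy⟩
  · exact ⟨k + j, .inl (by rw [iterate_add_apply, hxy, hyz])⟩
  · rcases le_total j k with h | h
    exacts [⟨k - j, .inr (meet hxy hzy h)⟩, ⟨j - k, .inl (meet hzy hxy h)⟩]
  · rcases le_total j k with h | h
    exacts [⟨k - j, .inl (split hyx hyz h)⟩, ⟨j - k, .inr (split hyz hyx h)⟩]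
  · exact ⟨j + k, .inr (by rw [iterate_add_apply, hzy, hyx])⟩

theorem Pi.single_left_injective {ι M : Type*} [DecidableEq ι] [Zero M] {a : M} (ha : a ≠ 0) :
    Injective (fun i : ι => Pi.single i a) := by
  intro i j h
  by_contra hij
  have := congrFun h i
  simp [Ne.symm hij, ha] at this

theorem sub_single_one_injective {ι : Type*} [DecidableEq ι] :
    Injective (fun i : ι => ((fun _ => 1) - Pi.single i (1 : ℤ) : ι → ℤ)) :=
  sub_right_injective.comp (Pi.single_left_injective one_ne_zero)

theorem card_gradVals (n : ℕ) : Nat.card (gradVals n) = n + 1 := by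
  rw [gradVals, Nat.card_range_of_injective sub_single_one_injective, Nat.card_eq_fintype_card,
    Fintype.card_fin]

theorem Nat.card_fst_fiber_of_bijective {X B C : Type*} {F : X → B × C} (hF : Bijective F)
    (b : B) : Nat.card {x // (F x).1 = b} = Nat.card C :=
  calc Nat.card {x // (F x).1 = b}
    _ = Nat.card {p : B × C // p.1 = b} :=
      Nat.card_congr ((Equiv.ofBijective F hF).subtypeEquiv fun _ => Iff.rfl)
    _ = Nat.card ({b' // b' = b} × C) :=
      Nat.card_congr (Equiv.prodSubtypeFstEquivSubtypeProd (α := B) (β := C) (p := (· = b)))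
    _ = Nat.card C := by rw [Nat.card_prod, Nat.card_unique, one_mul]

namespace Slant

variable {n : ℕ}

theorem shift_injective : Injective (shift : Slant (n + 1) → Slant (n + 1)) := by
  rintro ⟨a, ρ⟩ ⟨a', ρ'⟩ h
  simp only [shift, mk.injEq] at h
  obtain ⟨ha, hρ⟩ := h
  obtain rfl : ρ = ρ' := mul_right_cancel (b := finRotate (n + 1)) hρ
  rw [add_right_cancel ha]

theorem iterate_shift_ρ (k : ℕ) (s : Slant (n + 1)) (i : Fin (n + 1)) :
    (shift^[k] s).ρ i = s.ρ (i + k) := by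
  induction k generalizing s with
  | zero => simp
  | succ k ih =>
    rw [iterate_succ_apply, ih]
    change s.ρ (finRotate (n + 1) (i + k)) = _
    rw [finRotate_apply, Nat.cast_succ, add_assoc]

theorem grad_iterate_shift (k : ℕ) (s : Slant (n + 1)) :
    (shift^[k] s).grad = (fun _ => 1) - Pi.single (s.ρ (Fin.last n + k)) 1 := by
  rw [grad, iterate_shift_ρ]

theorem grad_iterate_shift_eq_iff (k : ℕ) (s : Slant (n + 1)) :
    (shift^[k] s).grad = s.grad ↔ n + 1 ∣ k := by
  rw [grad_iterate_shift, grad, sub_single_one_injective.eq_iff, s.ρ.injective.eq_iff,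
    add_eq_left, Fin.natCast_eq_zero]

theorem exists_grad_iterate_shift_eq (s : Slant (n + 1)) (i : Fin (n + 1)) :
    ∃ k : ℕ, (shift^[k] s).grad = (fun _ => 1) - Pi.single i 1 := by
  refine ⟨(s.ρ.symm i - Fin.last n).val, ?_⟩
  rw [grad_iterate_shift, Fin.cast_val_eq_self, add_sub_cancel, Equiv.apply_symm_apply]

def gradVal (s : Slant (n + 1)) : gradVals n :=
  ⟨s.grad, s.ρ (Fin.last n), rfl⟩

end Slant

theorem relσ_equivalence (n : ℕ) : Equivalence (relσ n) :=
  Slant.shift_injective.equivalence_iterate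

theorem relσ_of_relσN {n : ℕ} {s s' : Slant (n + 1)} (h : relσN n s s') : relσ n s s' :=
  let ⟨k, hk⟩ := h
  ⟨(n + 1) * k, hk⟩

theorem Slant.grad_eq_of_relσN {n : ℕ} {s s' : Slant (n + 1)} (h : relσN n s s') :
    s.grad = s'.grad := by
  obtain ⟨k, rfl | rfl⟩ := h
  · exact ((grad_iterate_shift_eq_iff _ s).2 (dvd_mul_right _ _)).symm
  · exact (grad_iterate_shift_eq_iff _ s').2 (dvd_mul_right _ _)

theorem relσN_of_relσ_of_grad_eq {n : ℕ} {s s' : Slant (n + 1)} (h : relσ n s s')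
    (hD : s.grad = s'.grad) : relσN n s s' := by
  obtain ⟨k, rfl | rfl⟩ := h
  · obtain ⟨m, rfl⟩ := (Slant.grad_iterate_shift_eq_iff k s).1 hD.symm
    exact ⟨m, .inl rfl⟩
  · obtain ⟨m, rfl⟩ := (Slant.grad_iterate_shift_eq_iff k s').1 hD
    exact ⟨m, .inr rfl⟩

def tangentBundleMap (n : ℕ) : Quot (relσN n) → Quot (relσ n) × gradVals n :=
  Quot.lift (fun s => (Quot.mk _ s, s.gradVal)) fun _ _ h =>
    Prod.ext (Quot.sound (relσ_of_relσN h)) (Subtype.ext (Slant.grad_eq_of_relσN h))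

theorem tangentBundleMap_injective (n : ℕ) : Injective (tangentBundleMap n) := by
  rintro ⟨s⟩ ⟨s'⟩ h
  obtain ⟨hB, hD⟩ := Prod.ext_iff.1 h
  have hσ : relσ n s s' := (relσ_equivalence n).eqvGen_iff.1 (Quot.eq.1 hB)
  exact Quot.sound (relσN_of_relσ_of_grad_eq hσ (congrArg Subtype.val hD))

theorem tangentBundleMap_surjective (n : ℕ) : Surjective (tangentBundleMap n) := by
  rintro ⟨⟨s⟩, v, i, rfl⟩
  obtain ⟨k, hk⟩ := s.exists_grad_iterate_shift_eq i
  exact ⟨Quot.mk _ (Slant.shift^[k] s), Prod.ext (Quot.sound ⟨k, .inr rfl⟩) (Subtype.ext hk)⟩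

/-- The map `s mod σ^N ↦ (s mod σ, D(s))` is a well-defined bijection from
`T[B] = S/σ^N` onto `B × {e/x_1,…,e/x_N}`; in particular every fiber of the natural
projection `π : T[B] → B` has exactly `N` elements. -/
theorem tangent_bundle_bijection (n : ℕ) :
    (∃ F : Quot (relσN n) → Quot (relσ n) × (gradVals n),
      (∀ s : Slant (n + 1),
        F (Quot.mk _ s) = (Quot.mk _ s, ⟨s.grad, ⟨s.ρ (Fin.last n), rfl⟩⟩)) ∧
      Function.Bijective F) ∧
    (∃ π : Quot (relσN n) → Quot (relσ n),
      (∀ s : Slant (n + 1), π (Quot.mk _ s) = Quot.mk _ s) ∧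
      ∀ t : Quot (relσ n), Nat.card {u : Quot (relσN n) // π u = t} = n + 1) := by
  have hF : Bijective (tangentBundleMap n) :=
    ⟨tangentBundleMap_injective n, tangentBundleMap_surjective n⟩
  refine ⟨⟨tangentBundleMap n, fun _ => rfl, hF⟩,
    fun u => (tangentBundleMap n u).1, fun _ => rfl, fun t => ?_⟩
  rw [Nat.card_fst_fiber_of_bijective hF, card_gradVals]
end

section
/- For a slant N-hedron s = a[x_{ρ(1)},…,x_{ρ(N-1)}], define s_D = (a+e_{ρ(1)})[x_{ρ(2)},…,x_{ρ(N-1)}, x_{ρ(1)}]. Then D(s_D) = D(s), and the simplices s and s_D intersect exactly in a common facet, namely the (N-2)-simplex conv{a+e_{ρ(1)}, a+e_{ρ(1)}+e_{ρ(2)}, …, a+e_{ρ(1)}+⋯+e_{ρ(N-1)}}. -/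
noncomputable def Slant.vert {N : ℕ} (s : Slant N) (k : Fin N) : Fin N → ℝ :=
  (fun j => (s.a j : ℝ)) + ∑ i ∈ Finset.Iio k, Pi.single (s.ρ i) 1

noncomputable def Slant.simplex {N : ℕ} (s : Slant N) : Set (Fin N → ℝ) :=
  convexHull ℝ (Set.range s.vert)

/-- `s_D = (a+e_{ρ(1)})[x_{ρ(2)},…,x_{ρ(N-1)},x_{ρ(1)}]` : the base point moves by
`e_{ρ(1)}` and the bracket indices `ρ(1),…,ρ(N-1)` are cyclically permuted, the omitted
index `ρ(N)` staying fixed. -/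
def Slant.sD {n : ℕ} (s : Slant (n + 2)) : Slant (n + 2) :=
  ⟨s.a + Pi.single (s.ρ 0) 1,
   (((Equiv.swap (⟨n, by omega⟩ : Fin (n + 2)) (Fin.last (n + 1))).trans
      (finRotate (n + 2)))).trans s.ρ⟩

open Finset

theorem Fin.sum_Iio_succ {M : Type*} [AddCommMonoid M] {n : ℕ} (f : Fin (n + 1) → M)
    (k : Fin n) : ∑ i < k.succ, f i = f 0 + ∑ i < k, f i.succ := by
  rw [Iio_eq_Ico, bot_eq_zero, ← Ioo_insert_left k.succ_pos, sum_insert left_notMem_Ioo,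
    ← Fin.map_succEmb_Iio, sum_map]
  rfl

theorem convexHull_inter_preimage_subset_of_le {𝕜 E : Type*} [Field 𝕜] [LinearOrder 𝕜]
    [IsStrictOrderedRing 𝕜] [AddCommGroup E] [Module 𝕜 E] {S : Set E} (f : E →ₗ[𝕜] 𝕜) {c : 𝕜}
    (hS : ∀ x ∈ S, f x ≤ c) :
    convexHull 𝕜 S ∩ f ⁻¹' {c} ⊆ convexHull 𝕜 (S ∩ f ⁻¹' {c}) := by
  classical
  rintro _ ⟨hx, hfx⟩
  obtain ⟨ι, _, w, z, hw₀, hw₁, hz, rfl⟩ := mem_convexHull_iff_exists_fintype.1 hx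
  have hslack : ∑ i, w i * (c - f (z i)) = 0 := by
    simp only [Set.mem_preimage, Set.mem_singleton_iff, map_sum, map_smul, smul_eq_mul] at hfx
    simp only [mul_sub, sum_sub_distrib, ← sum_mul, hw₁, one_mul, hfx, sub_self]
  have hface : ∀ i, w i ≠ 0 → f (z i) = c := by
    intro i hi
    have := (sum_eq_zero_iff_of_nonneg fun j _ ↦
      mul_nonneg (hw₀ j) (sub_nonneg.2 (hS _ (hz j)))).1 hslack i (mem_univ i)
    linarith [(mul_eq_zero.1 this).resolve_left hi]
  rw [← sum_filter_of_ne (p := fun i ↦ w i ≠ 0) fun i _ h ↦ left_ne_zero_of_smul h]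
  exact (convex_convexHull 𝕜 _).sum_mem (fun i _ ↦ hw₀ i) (by rwa [sum_filter_ne_zero])
    fun i hi ↦ subset_convexHull 𝕜 _ ⟨hz i, hface i (mem_filter.1 hi).2⟩

namespace Slant

theorem vert_apply_ρ {N : ℕ} (s : Slant N) (k i : Fin N) :
    s.vert k (s.ρ i) = s.a (s.ρ i) + if i < k then 1 else 0 := by
  simp [vert, Finset.sum_apply, Pi.single_apply]

variable {n : ℕ} (s : Slant (n + 2))

theorem sD_a : s.sD.a = s.a + Pi.single (s.ρ 0) 1 := rfl

theorem sD_ρ_apply (i : Fin (n + 2)) :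
    s.sD.ρ i = s.ρ (finRotate (n + 2) (Equiv.swap ⟨n, by omega⟩ (Fin.last (n + 1)) i)) := rfl

theorem sD_ρ_last : s.sD.ρ (Fin.last (n + 1)) = s.ρ (Fin.last (n + 1)) := by
  rw [sD_ρ_apply, Equiv.swap_apply_right, finRotate_of_lt n.lt_succ_self]
  rfl

theorem sD_ρ_castSucc_last : s.sD.ρ (Fin.last n).castSucc = s.ρ 0 := by
  rw [sD_ρ_apply, ← finRotate_last (n := n + 1)]
  exact congrArg (s.ρ ∘ finRotate _) (Equiv.swap_apply_left _ _)

theorem sD_ρ_castSucc {i : Fin (n + 1)} (hi : i ≠ Fin.last n) :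
    s.sD.ρ i.castSucc = s.ρ i.succ := by
  have hi' : (i : ℕ) < n := Fin.val_lt_last hi
  rw [sD_ρ_apply, Equiv.swap_apply_of_ne_of_ne (Fin.ne_of_val_ne hi'.ne)
    (Fin.castSucc_lt_last i).ne, finRotate_of_lt (by simpa using hi'.trans n.lt_succ_self)]
  rfl

theorem sD_vert_castSucc (k : Fin (n + 1)) : s.sD.vert k.castSucc = s.vert k.succ := by
  have hk : ∀ i ∈ Iio k, (Pi.single (s.sD.ρ i.castSucc) 1 : Fin (n + 2) → ℝ) =
      Pi.single (s.ρ i.succ) 1 :=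
    fun i hi ↦ by rw [s.sD_ρ_castSucc (mem_Iio.1 hi |>.trans_le (Fin.le_last k)).ne]
  simp only [vert, Fin.sum_Iio_castSucc, Fin.sum_Iio_succ, sum_congr rfl hk, sD_a]
  rw [← add_assoc]
  congr 1
  ext j
  by_cases h : j = s.ρ 0 <;> simp [h]

theorem vert_apply_ρ_zero_le (k : Fin (n + 2)) : s.vert k (s.ρ 0) ≤ s.a (s.ρ 0) + 1 := by
  rw [vert_apply_ρ]
  split_ifs <;> norm_num

theorem le_sD_vert_apply_ρ_zero (k : Fin (n + 2)) : s.a (s.ρ 0) + 1 ≤ s.sD.vert k (s.ρ 0) := by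
  rw [← sD_ρ_castSucc_last, vert_apply_ρ, sD_ρ_castSucc_last, sD_a]
  split_ifs <;> simp

end Slant

/-- `D(s_D) = D(s)`, and `s` and `s_D` intersect exactly in the common facet
`conv{a+e_{ρ(1)}, a+e_{ρ(1)}+e_{ρ(2)}, …, a+e_{ρ(1)}+⋯+e_{ρ(N-1)}}`. -/
theorem sD_grad_and_common_facet (n : ℕ) (s : Slant (n + 2)) :
    s.sD.grad = s.grad ∧
    s.simplex ∩ s.sD.simplex =
      convexHull ℝ (Set.range fun k : Fin (n + 1) => s.vert k.succ) := by
  refine ⟨by rw [Slant.grad, Slant.grad, s.sD_ρ_last], Set.Subset.antisymm ?_ ?_⟩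
  · set f : (Fin (n + 2) → ℝ) →ₗ[ℝ] ℝ := LinearMap.proj (s.ρ 0)
    set c : ℝ := s.a (s.ρ 0) + 1
    have hs : s.simplex ⊆ {x | f x ≤ c} := convexHull_min
      (Set.range_subset_iff.2 s.vert_apply_ρ_zero_le) (convex_halfSpace_le f.isLinear c)
    have hsD : s.sD.simplex ⊆ {x | c ≤ f x} := convexHull_min
      (Set.range_subset_iff.2 s.le_sD_vert_apply_ρ_zero) (convex_halfSpace_ge f.isLinear c)
    have hfacet :
        Set.range s.vert ∩ f ⁻¹' {c} ⊆ Set.range fun k : Fin (n + 1) => s.vert k.succ := by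
      rintro _ ⟨⟨k, rfl⟩, hk⟩
      obtain ⟨k, rfl⟩ : ∃ j : Fin (n + 1), j.succ = k := Fin.exists_succ_eq.2 fun h ↦ by
        simp [f, c, h, Slant.vert_apply_ρ] at hk
      exact ⟨k, rfl⟩
    calc s.simplex ∩ s.sD.simplex ⊆ convexHull ℝ (Set.range s.vert) ∩ f ⁻¹' {c} :=
          fun x hx ↦ ⟨hx.1, le_antisymm (hs hx.1) (hsD hx.2)⟩
      _ ⊆ convexHull ℝ (Set.range s.vert ∩ f ⁻¹' {c}) :=
          convexHull_inter_preimage_subset_of_le f (Set.forall_mem_range.2 s.vert_apply_ρ_zero_le)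
      _ ⊆ _ := convexHull_mono hfacet
  · refine Set.subset_inter (convexHull_mono ?_) (convexHull_mono ?_) <;> rintro _ ⟨k, rfl⟩
    exacts [⟨k.succ, rfl⟩, ⟨k.castSucc, s.sD_vert_castSucc k⟩]
end
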